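/- Let F = [[A, B], [C, D]] be a real 2d×2d symplectic matrix and Θ a complex symmetric d×d matrix with positive definite real part. Then the 2d×d complex matrix [B; D] (the last d columns of F) has trivial kernel after multiplication on the left by [[Im Θ, I], [Re Θ, 0]]; that is, if v ∈ ℂ^d satisfies (Im Θ) B v + D v = 0 and (Re Θ) B v = 0, then v = 0. -/

import Mathlib

open Matrix

/-- The standard symplectic matrix `J = [[0, I], [-I, 0]]`. -/
noncomputable def symplJ (d : ℕ) : Matrix (Fin d ⊕ Fin d) (Fin d ⊕ Fin d) ℝ :=
  Matrix.fromBlocks 0 1 (-1) 0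

/-- The real part of a complex matrix. -/
def matRe {d : ℕ} (Θ : Matrix (Fin d) (Fin d) ℂ) : Matrix (Fin d) (Fin d) ℝ :=
  Matrix.of fun i j => (Θ i j).re

/-- The imaginary part of a complex matrix. -/
def matIm {d : ℕ} (Θ : Matrix (Fin d) (Fin d) ℂ) : Matrix (Fin d) (Fin d) ℝ :=
  Matrix.of fun i j => (Θ i j).im

/-!
Since `Re Θ` is invertible, `(Re Θ) B v = 0` forces `B v = 0`, and then the first equation
reads `D v = 0`. The upper right block of `Fᵀ J F = J` is `Aᵀ D - Cᵀ B = I`, so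
`v = Aᵀ (D v) - Cᵀ (B v) = 0`.
-/

namespace Matrix

variable {n R : Type*} [Fintype n] [DecidableEq n] [CommRing R]

theorem transpose_mul_sub_transpose_mul_eq_one_of_symplectic {A B C D : Matrix n n R}
    (h : (fromBlocks A B C D)ᵀ * fromBlocks 0 1 (-1) 0 * fromBlocks A B C D =
      fromBlocks 0 1 (-1) 0) :
    Aᵀ * D - Cᵀ * B = 1 := by
  have h₁₂ := congrArg toBlocks₁₂ h
  simp only [fromBlocks_transpose, fromBlocks_multiply, toBlocks_fromBlocks₁₂] at h₁₂
  simpa [sub_eq_neg_add] using h₁₂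

theorem eq_zero_of_mulVec_eq_zero_of_mul_sub_mul_eq_one {P Q B D : Matrix n n R} {v : n → R}
    (h : P * D - Q * B = 1) (hB : B *ᵥ v = 0) (hD : D *ᵥ v = 0) : v = 0 := by
  rw [← one_mulVec v, ← h, sub_mulVec, ← mulVec_mulVec, ← mulVec_mulVec, hB, hD,
    mulVec_zero, mulVec_zero, sub_zero]

end Matrix

theorem trivial_kernel_general {d : ℕ} (A B C D : Matrix (Fin d) (Fin d) ℝ)
    (Θ : Matrix (Fin d) (Fin d) ℂ)
    (hsymp : (Matrix.fromBlocks A B C D)ᵀ * symplJ d * Matrix.fromBlocks A B C D = symplJ d)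
    (hΘre : (matRe Θ).PosDef)
    (v : Fin d → ℂ)
    (h1 : ((matIm Θ).map Complex.ofReal).mulVec ((B.map Complex.ofReal).mulVec v)
        + (D.map Complex.ofReal).mulVec v = 0)
    (h2 : ((matRe Θ).map Complex.ofReal).mulVec ((B.map Complex.ofReal).mulVec v) = 0) :
    v = 0 := by
  have hdet : ((matRe Θ).map Complex.ofReal).det ≠ 0 := by
    change (Complex.ofRealHom.mapMatrix (matRe Θ)).det ≠ 0
    rw [← RingHom.map_det, Complex.ofRealHom_eq_coe, Complex.ofReal_ne_zero]
    exact hΘre.det_pos.ne'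
  have hBv := eq_zero_of_mulVec_eq_zero hdet h2
  have hDv : (D.map Complex.ofReal).mulVec v = 0 := by
    rwa [hBv, mulVec_zero, zero_add] at h1
  have hF := congrArg Complex.ofRealHom.mapMatrix
    (transpose_mul_sub_transpose_mul_eq_one_of_symplectic hsymp)
  rw [map_sub, map_mul, map_mul, map_one] at hF
  exact eq_zero_of_mulVec_eq_zero_of_mul_sub_mul_eq_one hF hBv hDv

/-- For `F = [[A,B],[C,D]]` real symplectic and `Θ` complex symmetric with
positive definite real part: if `v ∈ ℂ^d` satisfies `(Im Θ) B v + D v = 0` and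
`(Re Θ) B v = 0`, then `v = 0`. -/
theorem trivial_kernel {d : ℕ} (A B C D : Matrix (Fin d) (Fin d) ℝ)
    (Θ : Matrix (Fin d) (Fin d) ℂ)
    (hsymp : (Matrix.fromBlocks A B C D)ᵀ * symplJ d * Matrix.fromBlocks A B C D = symplJ d)
    (hΘsymm : Θᵀ = Θ)
    (hΘre : (matRe Θ).PosDef)
    (v : Fin d → ℂ)
    (h1 : ((matIm Θ).map Complex.ofReal).mulVec ((B.map Complex.ofReal).mulVec v)
        + (D.map Complex.ofReal).mulVec v = 0)
    (h2 : ((matRe Θ).map Complex.ofReal).mulVec ((B.map Complex.ofReal).mulVec v) = 0) :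
    v = 0 :=
  trivial_kernel_general A B C D Θ hsymp hΘre v h1 h2
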